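/- Let ε ∈ (0, 1/2] and let f : [0,1] → ℝ≥0 be a continuous, strictly decreasing, log-concave probability density (∫₀¹ f = 1). Let t′ be a positive integer with (1−ε)^{t′} ≤ ε/2 and suppose f(0)·(1−ε)^{t′} ≥ f(1), so that there is a (unique) point x_{t′} ∈ [0,1] with f(x_{t′}) = f(0)·(1−ε)^{t′}. Then the tail mass satisfies ∫_{x_{t′}}^{1} f(x) dx ≤ ε. (Claim claim:tail-pc from the proof of Lemma lem:lc-struct.) -/
import Mathlib


open Set intervalIntegral

/-- Claim claim:tail-pc from the proof of Lemma lem:lc-struct: for a continuous,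
strictly decreasing, log-concave density f on [0,1], if (1−ε)^{t′} ≤ ε/2 and x_{t′}
is the point where f drops to f(0)(1−ε)^{t′}, then the tail ∫_{x_{t′}}^1 f ≤ ε.
Log-concavity is expressed via An's (1995) ratio characterization. -/
theorem logconcave_tail_mass_bound
    (ε : ℝ) (hε0 : 0 < ε) (hε1 : ε ≤ 1 / 2)
    (f : ℝ → ℝ)
    (hfc : ContinuousOn f (Set.Icc 0 1))
    (hfnn : ∀ x ∈ Set.Icc (0 : ℝ) 1, 0 ≤ f x)
    (hfdec : StrictAntiOn f (Set.Icc 0 1))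
    (hlc : ∀ x₁ x₂ δ : ℝ, 0 ≤ δ → x₁ < x₂ →
      x₁ ∈ Set.Icc (0 : ℝ) 1 → x₂ ∈ Set.Icc (0 : ℝ) 1 →
      x₁ + δ ∈ Set.Icc (0 : ℝ) 1 → x₂ + δ ∈ Set.Icc (0 : ℝ) 1 →
      f (x₂ + δ) * f x₁ ≤ f (x₁ + δ) * f x₂)
    (hint : (∫ x in (0 : ℝ)..1, f x) = 1)
    (t' : ℕ) (ht' : 0 < t')
    (hsmall : (1 - ε) ^ t' ≤ ε / 2)
    (hrange : f 1 ≤ f 0 * (1 - ε) ^ t')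
    (xt : ℝ) (hxt : xt ∈ Set.Icc (0 : ℝ) 1)
    (hfxt : f xt = f 0 * (1 - ε) ^ t') :
    (∫ x in xt..1, f x) ≤ ε := by
  obtain ⟨hxt0, hxt1⟩ := hxt
  have h0mem : (0 : ℝ) ∈ Set.Icc (0 : ℝ) 1 := ⟨le_refl _, by norm_num⟩
  have h1mem : (1 : ℝ) ∈ Set.Icc (0 : ℝ) 1 := ⟨by norm_num, le_refl _⟩
  have hf1 : 0 ≤ f 1 := hfnn 1 h1mem
  have hf0pos : 0 < f 0 := lt_of_le_of_lt hf1 (hfdec h0mem h1mem (by norm_num))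
  have hpowlt : (1 - ε) ^ t' < 1 := by
    apply pow_lt_one₀ (by linarith) (by linarith) ht'.ne'
  have hpownn : 0 ≤ (1 - ε) ^ t' := pow_nonneg (by linarith) _
  have hxtpos : 0 < xt := by
    rcases lt_or_eq_of_le hxt0 with h | h
    · exact h
    · exfalso
      rw [← h] at hfxt
      nlinarith
  -- key pointwise bound
  have key : ∀ δ ∈ Set.Icc (0 : ℝ) (1 - xt), f (δ + xt) ≤ (1 - ε) ^ t' * f δ := by
    intro δ ⟨hδ0, hδ1⟩
    have h := hlc 0 xt δ hδ0 hxtpos h0mem ⟨hxt0, hxt1⟩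
      ⟨by linarith, by linarith⟩ ⟨by linarith, by linarith⟩
    rw [zero_add] at h
    rw [hfxt] at h
    have : f (xt + δ) * f 0 ≤ (1 - ε) ^ t' * f δ * f 0 := by nlinarith
    have h2 : f (xt + δ) ≤ (1 - ε) ^ t' * f δ := le_of_mul_le_mul_right this hf0pos
    rwa [add_comm] at h2
  -- integrability
  have hintsub : ∀ a b : ℝ, 0 ≤ a → b ≤ 1 → a ≤ b →
      IntervalIntegrable f MeasureTheory.volume a b := by
    intro a b ha hb hab
    apply (hfc.mono _).intervalIntegrable
    rw [Set.uIcc_of_le hab]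
    exact Set.Icc_subset_Icc ha hb
  -- rewrite tail integral via shift
  have hshift : (∫ x in xt..1, f x) = ∫ δ in (0:ℝ)..(1 - xt), f (δ + xt) := by
    rw [intervalIntegral.integral_comp_add_right (fun x => f x) xt]
    norm_num
  have hintshift : IntervalIntegrable (fun δ => f (δ + xt)) MeasureTheory.volume 0 (1 - xt) := by
    apply ContinuousOn.intervalIntegrable
    apply (hfc.comp (Continuous.continuousOn (by continuity)) _)
    intro x hx
    rw [Set.uIcc_of_le (by linarith)] at hx
    simp only [Set.mem_Icc]
    exact ⟨by show (0:ℝ) ≤ x + xt; linarith [hx.1], by show x + xt ≤ (1:ℝ); linarith [hx.2]⟩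
  have hintshift2 : IntervalIntegrable (fun δ => (1 - ε) ^ t' * f δ) MeasureTheory.volume 0 (1 - xt) :=
    (hintsub 0 (1 - xt) le_rfl (by linarith) (by linarith)).const_mul _
  have hmono : (∫ δ in (0:ℝ)..(1 - xt), f (δ + xt))
      ≤ ∫ δ in (0:ℝ)..(1 - xt), (1 - ε) ^ t' * f δ := by
    apply intervalIntegral.integral_mono_on (by linarith) hintshift hintshift2
    exact key
  have hsplit : (∫ x in (0:ℝ)..(1 - xt), f x) ≤ 1 := by
    have h1 : (∫ x in (0:ℝ)..(1 - xt), f x) + (∫ x in (1 - xt)..1, f x) = 1 := by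
      rw [intervalIntegral.integral_add_adjacent_intervals
        (hintsub 0 (1 - xt) le_rfl (by linarith) (by linarith))
        (hintsub (1 - xt) 1 (by linarith) le_rfl (by linarith))]
      exact hint
    have h2 : 0 ≤ ∫ x in (1 - xt)..1, f x := by
      apply intervalIntegral.integral_nonneg (by linarith)
      intro x hx
      exact hfnn x ⟨by linarith [hx.1], hx.2⟩
    linarith
  calc (∫ x in xt..1, f x) = ∫ δ in (0:ℝ)..(1 - xt), f (δ + xt) := hshift
    _ ≤ ∫ δ in (0:ℝ)..(1 - xt), (1 - ε) ^ t' * f δ := hmono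
    _ = (1 - ε) ^ t' * ∫ δ in (0:ℝ)..(1 - xt), f δ := intervalIntegral.integral_const_mul _ _
    _ ≤ (1 - ε) ^ t' * 1 := by nlinarith
    _ ≤ ε := by linarith
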